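/- BR-Typestate Expressiveness: Let 𝕋_mca = ⟨S_mca, A, →_mca, π_mca, F_mca⟩ be the labeled transition system of an arbitrary multiple counters automaton, with states S_mca ⊆ Q × (C ∪ C') (pairs of a control state and a counter constraint), transitions labeled by guard formulas, and start state q₀ = (s₀, c₀). Let 𝕋_br = ⟨S_br, A, →_br, π_br, F_br⟩ be the BR-Typestate labeled transition system, with states S_br ⊆ Φ × PS given by the swapped pairs (c, s) for each (s, c) occurring in S_mca, final states F_br the swapped pairs of F_mca, and a transition ((c_{i-1}, s_{i-1}), a, (c'_{i-1}, s_i)) ∈ →_br (with action a the typestate-transition type (s_{i-1}, c_{i-1}).τ ≫ (s_i, c'_{i-1}).τ) for each transition (q_{i-1}, (c_{i-1}, c'_{i-1}), q_i) ∈ →_mca. Then the relation Sim = {((c, s), (s, c)) : (s, c) ∈ S_mca} is a simulation of 𝕋_mca by 𝕋_br, and in particular (p₀, q₀) ∈ Sim for the respective start states p₀ = (c₀, s₀) and q₀ = (s₀, c₀); hence 𝕋_br simulates 𝕋_mca. -/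
import Mathlib


/-- A labeled transition system `𝕋 = ⟨S, A, →, π, F⟩` over an alphabet `L`:
a (possibly infinite) set of states with a distinguished start state, a set
`F` of final states, a transition relation `→ ⊆ S × A × S` over the action
set `A`, and a labeling function `π : S → L`. -/
structure LTS (S A L : Type*) where
  states : Set S
  start : S
  final : Set S
  trans : Set (S × A × S)
  label : S → L

/-- A relation `R ⊆ S₁ × S₂` is a simulation of `T₂` by `T₁` (over the same
action set `A`) if for all `(p, q) ∈ R` and all actions `a`:
(i) if `q ∈ F₂` then `p ∈ F₁`; and (ii) whenever `(q, a, q') ∈ →₂` there is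
`p'` with `(p, a, p') ∈ →₁` and `(p', q') ∈ R`. -/
def IsSimulation {S₁ S₂ A L₁ L₂ : Type*} (T₁ : LTS S₁ A L₁) (T₂ : LTS S₂ A L₂)
    (R : Set (S₁ × S₂)) : Prop :=
  ∀ p q, (p, q) ∈ R →
    (q ∈ T₂.final → p ∈ T₁.final) ∧
    (∀ (a : A) (q' : S₂), (q, a, q') ∈ T₂.trans →
      ∃ p' : S₁, (p, a, p') ∈ T₁.trans ∧ (p', q') ∈ R)

/-- `T₁` simulates `T₂` iff the respective start states are related by some
simulation relation. -/
def Simulates {S₁ S₂ A L₁ L₂ : Type*} (T₁ : LTS S₁ A L₁) (T₂ : LTS S₂ A L₂) : Prop :=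
  ∃ R : Set (S₁ × S₂), IsSimulation T₁ T₂ R ∧ (T₁.start, T₂.start) ∈ R

/-- Comparison operators `# ∈ {≥, ≤, =, >, <}` of guard atoms. -/
inductive CmpOp where
  | ge : CmpOp
  | le : CmpOp
  | eq : CmpOp
  | gt : CmpOp
  | lt : CmpOp

/-- A counter variable from `C ∪ C'`: a counter name from `C`, possibly
primed. -/
structure CtrVar (C : Type*) where
  name : C
  primed : Bool

/-- Atomic guard formulas: `x # y + c` and `x # c` with `x, y ∈ C ∪ C'`,
`# ∈ {≥, ≤, =, >, <}` and `c ∈ ℤ`. -/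
inductive GuardAtom (C : Type*) where
  | cmpVar : CtrVar C → CmpOp → CtrVar C → ℤ → GuardAtom C
  | cmpConst : CtrVar C → CmpOp → ℤ → GuardAtom C

/-- A guard in `G(C, C')` is a conjunction (here: a list) of atomic guard
formulas over the counter names `C` and their primed copies `C'`. -/
abbrev Guard (C : Type*) := List (GuardAtom C)

/-- A multiple counters automaton `(Q, q_i, C, δ)`: a finite set `Q` of
control states, an initial control state with an initial counter constraint,
a transition relation `δ` whose transitions `(q, (c, c'), q')` carry the
unprimed and primed counter-constraint components of the guard, and a set of
final configurations. -/
structure MCA (Q C : Type*) where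
  finQ : Finite Q
  init : Q
  initGuard : Guard C
  delta : Set (Q × (Guard C × Guard C) × Q)
  final : Set (Q × Guard C)

/-- The labeled transition system `𝕋_mca` of a multiple counters automaton:
states are pairs `(q, c)` of a control state and a counter constraint
occurring in `δ` (together with the start configuration), actions are the
guard pairs `(c, c')`, and `(q, (c, c'), q') ∈ δ` contributes the transition
`((q, c), (c, c'), (q', c'))`. -/
def mcaLTS {Q C : Type*} (M : MCA Q C) : LTS (Q × Guard C) (Guard C × Guard C) (Q × Guard C) where
  states := {s | s = (M.init, M.initGuard) ∨
    (∃ g' q', (s.1, (s.2, g'), q') ∈ M.delta) ∨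
    (∃ q g, (q, (g, s.2), s.1) ∈ M.delta)}
  start := (M.init, M.initGuard)
  final := M.final
  trans := {t | ∃ q g g' q', (q, (g, g'), q') ∈ M.delta ∧
    t = ((q, g), (g, g'), (q', g'))}
  label := id

/-- The BR-Typestate labeled transition system `𝕋_br` associated with a
multiple counters automaton: its states are the swapped pairs `(c, q)`
(a dependent-type instance `(c, q).τ` is determined by its counter constraint
`c` together with its property state `q`), its final states are the swapped
final states of `𝕋_mca`, and each transition `((q, c), a, (q', c'))` of
`𝕋_mca` yields the transition `((c, q), a, (c', q'))` of `𝕋_br` (whose action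
corresponds to the typestate-transition type `(q, c).τ ≫ (q', c').τ`). -/
def brLTS {Q C : Type*} (M : MCA Q C) : LTS (Guard C × Q) (Guard C × Guard C) (Guard C × Q) where
  states := Prod.swap '' (mcaLTS M).states
  start := (M.initGuard, M.init)
  final := Prod.swap '' (mcaLTS M).final
  trans := {t | ∃ q g a g' q', ((q, g), a, (q', g')) ∈ (mcaLTS M).trans ∧
    t = ((g, q), a, (g', q'))}
  label := id

/-- The relation `Sim = {((c, s), (s, c)) : (s, c) ∈ S_mca}` between states
of `𝕋_br` and states of `𝕋_mca`. -/
def brSim {Q C : Type*} (M : MCA Q C) : Set ((Guard C × Q) × (Q × Guard C)) :=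
  {p | ∃ s c, (s, c) ∈ (mcaLTS M).states ∧ p = ((c, s), (s, c))}

/-- **BR-Typestate expressiveness** (Theorem 4 of "Beyond-Regular
Typestate"): for the LTS `𝕋_mca` of an arbitrary multiple counters automaton
and the associated BR-Typestate LTS `𝕋_br`, the relation
`Sim = {((c, s), (s, c)) : (s, c) ∈ S_mca}` is a simulation of `𝕋_mca` by
`𝕋_br`; in particular the start states satisfy `(p₀, q₀) ∈ Sim`, and hence
`𝕋_br` simulates `𝕋_mca`. -/
theorem brTypestate_simulates_mca {Q C : Type*} (M : MCA Q C) :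
    IsSimulation (brLTS M) (mcaLTS M) (brSim M) ∧
    ((brLTS M).start, (mcaLTS M).start) ∈ brSim M ∧
    Simulates (brLTS M) (mcaLTS M) := by
  have hsim : IsSimulation (brLTS M) (mcaLTS M) (brSim M) := by
    rintro p q ⟨s, c, hs, heq⟩
    injection heq with h1 h2; subst h1; subst h2
    constructor
    · intro hf
      exact ⟨(s, c), hf, rfl⟩
    · rintro a q' ⟨q₀, g, g', q₁, hδ, heq2⟩
      injection heq2 with e1 e2
      injection e1 with e1a e1b; subst e1a; subst e1b
      injection e2 with e2a e2b; subst e2a; subst e2b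
      refine ⟨(g', q₁), ⟨s, c, _, g', q₁, ⟨s, c, g', q₁, hδ, rfl⟩, rfl⟩, ?_⟩
      exact ⟨q₁, g', Or.inr (Or.inr ⟨s, c, hδ⟩), rfl⟩
  have hstart : ((brLTS M).start, (mcaLTS M).start) ∈ brSim M :=
    ⟨M.init, M.initGuard, Or.inl rfl, rfl⟩
  exact ⟨hsim, hstart, brSim M, hsim, hstart⟩
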